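/- Three-dimensional Haar coefficient decay (Lemma 1): if v : [0,1]³ → ℝ is Lipschitz continuous with constant L (with respect to the Euclidean metric), then for any three Haar wavelets h_{j,k₁}, h_{j,k₂}, h_{j,k₃} at the same level j (with m = 2^j), the wavelet coefficient a = ∫_0^1 ∫_0^1 ∫_0^1 v(x,y,z) h_{j,k₁}(x) h_{j,k₂}(y) h_{j,k₃}(z) dx dy dz satisfies |a| ≤ L/(4m⁴). -/

import Mathlib

open MeasureTheory

/-- The Haar wavelet `h_{j,k}` on `[0, 1)`. -/
noncomputable def haar01 (j k : ℕ) (x : ℝ) : ℝ :=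
  if (k : ℝ) / 2 ^ j ≤ x ∧ x < ((k : ℝ) + 1 / 2) / 2 ^ j then 1
  else if ((k : ℝ) + 1 / 2) / 2 ^ j ≤ x ∧ x < ((k : ℝ) + 1) / 2 ^ j then -1
  else 0

lemma haar01_abs_le (j k : ℕ) (x : ℝ) : |haar01 j k x| ≤ 1 := by
  unfold haar01; split_ifs <;> norm_num

lemma haar01_eq_zero {j k : ℕ} {x : ℝ}
    (hx : x ∉ Set.Icc ((k:ℝ)/2^j) (((k:ℝ)+1)/2^j)) : haar01 j k x = 0 := by
  have hm : (0:ℝ) < 2^j := by positivity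
  unfold haar01
  split_ifs with h1 h2
  · exact absurd ⟨h1.1, h1.2.le.trans (by gcongr <;> norm_num)⟩ hx
  · exact absurd ⟨le_trans (by gcongr <;> norm_num) h2.1, h2.2.le⟩ hx
  · rfl

lemma haar01_mul_eq (j k : ℕ) (f : ℝ → ℝ) (z : ℝ) (hc : z ≠ (k:ℝ)/2^j)
    (hd : z ≠ ((k:ℝ)+1/2)/2^j) (_he : z ≠ ((k:ℝ)+1)/2^j) :
    f z * haar01 j k z
      = (Set.Ioc ((k:ℝ)/2^j) (((k:ℝ)+1/2)/2^j)).indicator f z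
        - (Set.Ioc (((k:ℝ)+1/2)/2^j) (((k:ℝ)+1)/2^j)).indicator f z := by
  unfold haar01
  split_ifs with h1 h2
  · rw [Set.indicator_of_mem (Set.mem_Ioc.mpr ⟨lt_of_le_of_ne h1.1 (Ne.symm hc), h1.2.le⟩),
      Set.indicator_of_notMem (fun hz => absurd h1.2 (not_lt.mpr (Set.mem_Ioc.mp hz).1.le))]
    ring
  · rw [Set.indicator_of_notMem
        (fun hz => absurd (Set.mem_Ioc.mp hz).2 (not_le.mpr (lt_of_le_of_ne h2.1 (Ne.symm hd)))),
      Set.indicator_of_mem (Set.mem_Ioc.mpr ⟨lt_of_le_of_ne h2.1 (Ne.symm hd), h2.2.le⟩)]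
    ring
  · rw [Set.indicator_of_notMem
        (fun hz => h1 ⟨(Set.mem_Ioc.mp hz).1.le, lt_of_le_of_ne (Set.mem_Ioc.mp hz).2 hd⟩),
      Set.indicator_of_notMem
        (fun hz => h2 ⟨(Set.mem_Ioc.mp hz).1.le, lt_of_le_of_ne (Set.mem_Ioc.mp hz).2 _he⟩)]
    ring

lemma layer_bound (C : ℝ) (hC : 0 ≤ C) (j k : ℕ) (G : ℝ → ℝ)
    (hG : ∀ y ∈ Set.Ioc (0:ℝ) 1, |G y| ≤ C * |haar01 j k y|) :
    |∫ y in (0:ℝ)..1, G y| ≤ C / 2 ^ j := by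
  have hm : (0:ℝ) < 2^j := by positivity
  set c : ℝ := (k:ℝ)/2^j with hc
  set e : ℝ := ((k:ℝ)+1)/2^j with he
  have hce : c ≤ e := by rw [hc, he]; gcongr <;> norm_num
  set g : ℝ → ℝ := (Set.Icc c e).indicator (fun _ => C) with hgdef
  have hgint : Integrable g := by
    rw [hgdef, integrable_indicator_iff measurableSet_Icc]
    exact integrableOn_const measure_Icc_lt_top.ne
  have hgnn : ∀ y, 0 ≤ g y := fun y => Set.indicator_nonneg (fun _ _ => hC) y
  rw [intervalIntegral.integral_of_le (by norm_num : (0:ℝ) ≤ 1)]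
  calc |∫ y in Set.Ioc (0:ℝ) 1, G y|
      ≤ ∫ y in Set.Ioc (0:ℝ) 1, |G y| := by
        simpa [Real.norm_eq_abs] using
          norm_integral_le_integral_norm (μ := volume.restrict (Set.Ioc (0:ℝ) 1)) G
    _ ≤ ∫ y in Set.Ioc (0:ℝ) 1, g y := by
        apply integral_mono_of_nonneg (ae_of_all _ fun y => abs_nonneg _) hgint.integrableOn
        filter_upwards [ae_restrict_mem measurableSet_Ioc] with y hy
        by_cases hyc : y ∈ Set.Icc c e
        · have h2 := (hG y hy).trans (mul_le_mul_of_nonneg_left (haar01_abs_le j k y) hC)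
          simpa [hgdef, Set.indicator_of_mem hyc] using h2
        · have h0 : haar01 j k y = 0 := haar01_eq_zero hyc
          have := hG y hy
          simp only [h0, abs_zero, mul_zero] at this
          simpa [hgdef, Set.indicator_of_notMem hyc] using this
    _ ≤ ∫ y, g y := setIntegral_le_integral hgint (ae_of_all _ hgnn)
    _ = C * (e - c) := by
        rw [hgdef, integral_indicator_const _ measurableSet_Icc, measureReal_def, Real.volume_Icc,
          ENNReal.toReal_ofReal (by linarith), smul_eq_mul, mul_comm]
    _ = C / 2 ^ j := by rw [hc, he]; field_simp; ring

lemma haar_int_1d (f : ℝ → ℝ) (L : ℝ)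
    (hf : ∀ a ∈ Set.Icc (0:ℝ) 1, ∀ b ∈ Set.Icc (0:ℝ) 1, |f a - f b| ≤ L * |a - b|)
    (j k : ℕ) (hk : k < 2 ^ j) :
    |∫ z in (0:ℝ)..1, f z * haar01 j k z| ≤ L / (4 * ((2:ℝ) ^ j) ^ 2) := by
  have hm : (0:ℝ) < 2 ^ j := by positivity
  set c : ℝ := (k:ℝ)/2^j with hcdef
  set d : ℝ := ((k:ℝ)+1/2)/2^j with hddef
  set e : ℝ := ((k:ℝ)+1)/2^j with hedef
  set δ : ℝ := 1/(2*2^j) with hδdef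
  have hδpos : 0 < δ := by rw [hδdef]; positivity
  have hdc : d - c = δ := by rw [hcdef, hddef, hδdef]; field_simp; ring
  have hed : e - d = δ := by rw [hddef, hedef, hδdef]; field_simp; ring
  have hc0 : 0 ≤ c := by rw [hcdef]; positivity
  have hcd : c < d := by linarith
  have hde : d < e := by linarith
  have he1 : e ≤ 1 := by
    rw [hedef, div_le_one hm]
    have : ((k+1 : ℕ) : ℝ) ≤ ((2^j : ℕ) : ℝ) := Nat.cast_le.mpr hk
    push_cast at this; linarith
  have hfc : ContinuousOn f (Set.Icc (0:ℝ) 1) := by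
    have : LipschitzOnWith (Real.toNNReal L) f (Set.Icc (0:ℝ) 1) := by
      apply LipschitzOnWith.of_dist_le_mul
      intro a ha b hb
      rw [Real.dist_eq, Real.dist_eq]
      exact (hf a ha b hb).trans
        (mul_le_mul_of_nonneg_right (Real.le_coe_toNNReal L) (abs_nonneg _))
    exact this.continuousOn
  have hsubcd : Set.uIcc c d ⊆ Set.Icc (0:ℝ) 1 := by
    rw [Set.uIcc_of_le hcd.le]
    exact Set.Icc_subset_Icc hc0 (by linarith)
  have hint1 : IntervalIntegrable f volume c d := (hfc.mono hsubcd).intervalIntegrable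
  have hint1' : IntervalIntegrable f volume d e := by
    apply ContinuousOn.intervalIntegrable
    apply hfc.mono
    rw [Set.uIcc_of_le hde.le]
    exact Set.Icc_subset_Icc (by linarith) he1
  have hint2 : IntervalIntegrable (fun z => f (z + δ)) volume c d := by
    apply ContinuousOn.intervalIntegrable
    apply hfc.comp (Continuous.continuousOn (by continuity))
    intro z hz
    rw [Set.uIcc_of_le hcd.le] at hz
    show z + δ ∈ Set.Icc (0:ℝ) 1
    exact ⟨by linarith [hz.1], by linarith [hz.2]⟩
  have stepA : ∫ z in (0:ℝ)..1, f z * haar01 j k z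
      = (∫ z in c..d, f z) - ∫ z in d..e, f z := by
    have hi1 : Integrable ((Set.Ioc c d).indicator f) := by
      rw [integrable_indicator_iff measurableSet_Ioc]
      exact (intervalIntegrable_iff_integrableOn_Ioc_of_le hcd.le).mp hint1
    have hi2 : Integrable ((Set.Ioc d e).indicator f) := by
      rw [integrable_indicator_iff measurableSet_Ioc]
      exact (intervalIntegrable_iff_integrableOn_Ioc_of_le hde.le).mp hint1'
    have hae : (fun z => f z * haar01 j k z)
        =ᵐ[volume] fun z => (Set.Ioc c d).indicator f z - (Set.Ioc d e).indicator f z := by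
      have hnull : volume ({c, d, e} : Set ℝ) = 0 := (Set.toFinite _).measure_zero volume
      have h2 : ∀ᵐ (z : ℝ), z ∉ ({c, d, e} : Set ℝ) := by
        rw [ae_iff]
        convert hnull using 2
        ext z
        simp only [Set.mem_setOf_eq, Set.mem_insert_iff, Set.mem_singleton_iff, not_not]
      filter_upwards [h2] with z hz
      simp only [Set.mem_insert_iff, Set.mem_singleton_iff] at hz
      push_neg at hz
      exact haar01_mul_eq j k f z hz.1 hz.2.1 hz.2.2
    rw [intervalIntegral.integral_of_le (by norm_num : (0:ℝ) ≤ 1),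
      integral_congr_ae (ae_restrict_of_ae hae),
      integral_sub hi1.integrableOn hi2.integrableOn,
      setIntegral_eq_integral_of_forall_compl_eq_zero
        (s := Set.Ioc (0:ℝ) 1)
        (fun x hx => Set.indicator_of_notMem
          (fun hmem => hx ⟨lt_of_le_of_lt hc0 hmem.1, hmem.2.trans (by linarith)⟩) f),
      setIntegral_eq_integral_of_forall_compl_eq_zero
        (s := Set.Ioc (0:ℝ) 1)
        (fun x hx => Set.indicator_of_notMem
          (fun hmem => hx ⟨lt_of_le_of_lt (by linarith : (0:ℝ) ≤ d) hmem.1,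
            hmem.2.trans he1⟩) f),
      integral_indicator measurableSet_Ioc, integral_indicator measurableSet_Ioc,
      ← intervalIntegral.integral_of_le hcd.le, ← intervalIntegral.integral_of_le hde.le]
  have stepB : ∫ z in d..e, f z = ∫ z in c..d, f (z + δ) := by
    rw [intervalIntegral.integral_comp_add_right f δ]
    congr 1 <;> linarith
  rw [stepA, stepB, ← intervalIntegral.integral_sub hint1 hint2]
  have hbound : ∀ z ∈ Set.uIoc c d, ‖f z - f (z + δ)‖ ≤ L * δ := by
    intro z hz
    rw [Set.uIoc_of_le hcd.le] at hz
    have hz1 : z ∈ Set.Icc (0:ℝ) 1 := ⟨by linarith [hz.1], by linarith [hz.2]⟩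
    have hz2 : z + δ ∈ Set.Icc (0:ℝ) 1 := ⟨by linarith [hz.1], by linarith [hz.2]⟩
    have h := hf z hz1 (z + δ) hz2
    rw [Real.norm_eq_abs]
    refine h.trans ?_
    have : |z - (z + δ)| = δ := by rw [abs_sub_comm]; simp [abs_of_nonneg hδpos.le]
    rw [this]
  have hfin := intervalIntegral.norm_integral_le_of_norm_le_const hbound
  rw [Real.norm_eq_abs] at hfin
  refine hfin.trans ?_
  have habs : |d - c| = δ := by rw [hdc, abs_of_nonneg hδpos.le]
  rw [habs, hδdef]
  apply le_of_eq
  have h2j : ((2:ℝ)^j) ≠ 0 := by positivity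
  field_simp
  ring

theorem haar_coeff_decay_3d (v : ℝ → ℝ → ℝ → ℝ) (L : ℝ)
    (hv : ∀ x ∈ Set.Icc (0 : ℝ) 1, ∀ y ∈ Set.Icc (0 : ℝ) 1, ∀ z ∈ Set.Icc (0 : ℝ) 1,
      ∀ x' ∈ Set.Icc (0 : ℝ) 1, ∀ y' ∈ Set.Icc (0 : ℝ) 1, ∀ z' ∈ Set.Icc (0 : ℝ) 1,
        |v x y z - v x' y' z'|
          ≤ L * Real.sqrt ((x - x') ^ 2 + (y - y') ^ 2 + (z - z') ^ 2))
    (j k₁ k₂ k₃ : ℕ) (hk₁ : k₁ < 2 ^ j) (hk₂ : k₂ < 2 ^ j) (hk₃ : k₃ < 2 ^ j) :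
    |∫ x in (0 : ℝ)..1, ∫ y in (0 : ℝ)..1, ∫ z in (0 : ℝ)..1,
        v x y z * haar01 j k₁ x * haar01 j k₂ y * haar01 j k₃ z|
      ≤ L / (4 * ((2 : ℝ) ^ j) ^ 4) := by
  have hm : (0:ℝ) < 2 ^ j := by positivity
  have h0 : (0:ℝ) ∈ Set.Icc (0:ℝ) 1 := by norm_num
  have h1 : (1:ℝ) ∈ Set.Icc (0:ℝ) 1 := by norm_num
  have hL : 0 ≤ L := by
    have := hv 0 h0 0 h0 0 h0 1 h1 0 h0 0 h0
    have hs : Real.sqrt (((0:ℝ) - 1) ^ 2 + ((0:ℝ) - 0) ^ 2 + ((0:ℝ) - 0) ^ 2) = 1 := by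
      norm_num
    rw [hs, mul_one] at this
    exact le_trans (abs_nonneg _) this
  set D : ℝ := L / (4 * ((2:ℝ) ^ j) ^ 2) with hDdef
  have hD : 0 ≤ D := by rw [hDdef]; positivity
  -- innermost bound
  have hinner : ∀ x ∈ Set.Ioc (0:ℝ) 1, ∀ y ∈ Set.Ioc (0:ℝ) 1,
      |∫ z in (0:ℝ)..1, v x y z * haar01 j k₁ x * haar01 j k₂ y * haar01 j k₃ z|
        ≤ (D * |haar01 j k₁ x|) * |haar01 j k₂ y| := by
    intro x hx y hy
    have hx' : x ∈ Set.Icc (0:ℝ) 1 := Set.Ioc_subset_Icc_self hx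
    have hy' : y ∈ Set.Icc (0:ℝ) 1 := Set.Ioc_subset_Icc_self hy
    have hf : ∀ a ∈ Set.Icc (0:ℝ) 1, ∀ b ∈ Set.Icc (0:ℝ) 1,
        |v x y a - v x y b| ≤ L * |a - b| := by
      intro a ha b hb
      have := hv x hx' y hy' a ha x hx' y hy' b hb
      have hs : Real.sqrt ((x - x) ^ 2 + (y - y) ^ 2 + (a - b) ^ 2) = |a - b| := by
        simp [Real.sqrt_sq_eq_abs]
      rwa [hs] at this
    have hI := haar_int_1d (v x y) L hf j k₃ hk₃
    have hre : ∫ z in (0:ℝ)..1, v x y z * haar01 j k₁ x * haar01 j k₂ y * haar01 j k₃ z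
        = (haar01 j k₁ x * haar01 j k₂ y) * ∫ z in (0:ℝ)..1, v x y z * haar01 j k₃ z := by
      rw [← intervalIntegral.integral_const_mul]
      apply intervalIntegral.integral_congr
      intro z _
      ring
    rw [hre, abs_mul, abs_mul]
    calc |haar01 j k₁ x| * |haar01 j k₂ y| * |∫ z in (0:ℝ)..1, v x y z * haar01 j k₃ z|
        ≤ |haar01 j k₁ x| * |haar01 j k₂ y| * D :=
          mul_le_mul_of_nonneg_left hI (by positivity)
      _ = (D * |haar01 j k₁ x|) * |haar01 j k₂ y| := by ring
  -- y layer
  have hmid : ∀ x ∈ Set.Ioc (0:ℝ) 1,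
      |∫ y in (0:ℝ)..1, ∫ z in (0:ℝ)..1,
          v x y z * haar01 j k₁ x * haar01 j k₂ y * haar01 j k₃ z|
        ≤ (D / 2 ^ j) * |haar01 j k₁ x| := by
    intro x hx
    have := layer_bound (D * |haar01 j k₁ x|) (by positivity) j k₂ _ (hinner x hx)
    calc |∫ y in (0:ℝ)..1, ∫ z in (0:ℝ)..1,
          v x y z * haar01 j k₁ x * haar01 j k₂ y * haar01 j k₃ z|
        ≤ D * |haar01 j k₁ x| / 2 ^ j := this
      _ = (D / 2 ^ j) * |haar01 j k₁ x| := by ring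
  -- x layer
  have hfinal := layer_bound (D / 2 ^ j) (by positivity) j k₁ _ hmid
  refine hfinal.trans (le_of_eq ?_)
  rw [hDdef]
  have h2j : ((2:ℝ)^j) ≠ 0 := by positivity
  field_simp
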